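/- Every Fock state φ_{C,{T_i}} has a monic orthogonal polynomial system {P_u}, which moreover satisfies P_u(X₁,…,X_d)Ω = e_{u(1)}⊗…⊗e_{u(|u|)} in the deformed Fock space. -/

import Mathlib

noncomputable section
open scoped Classical

abbrev NCPoly (d : ℕ) := FreeAlgebra ℝ (Fin d)

def Xmon {d : ℕ} (u : List (Fin d)) : NCPoly d := (u.map (FreeAlgebra.ι ℝ)).prod

structure IsState {d : ℕ} (φ : NCPoly d →ₗ[ℝ] ℝ) : Prop where
  unital : φ 1 = 1
  star_comp : ∀ p : NCPoly d, φ (star p) = φ p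
  pos : ∀ p : NCPoly d, 0 ≤ φ (star p * p)

def ipS {d : ℕ} (φ : NCPoly d →ₗ[ℝ] ℝ) (p q : NCPoly d) : ℝ := φ (star p * q)

def IsMonicFamily {d : ℕ} (P : List (Fin d) → NCPoly d) : Prop :=
  ∀ u, P u - Xmon u ∈
    Submodule.span ℝ {q : NCPoly d | ∃ v : List (Fin d), v.length < u.length ∧ q = Xmon v}

def IsMOPS {d : ℕ} (φ : NCPoly d →ₗ[ℝ] ℝ) (P : List (Fin d) → NCPoly d) : Prop :=
  IsMonicFamily P ∧ ∀ u v, u ≠ v → ipS φ (P u) (P v) = 0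

def wordsLen (d : ℕ) : ℕ → Finset (List (Fin d))
  | 0 => {[]}
  | k + 1 => ((Finset.univ : Finset (Fin d)) ×ˢ wordsLen d k).image fun p => p.1 :: p.2

/-- The algebraic full Fock space over ℝ^d (= ℂ^d with real structure): the free
vector space on the set of words, a word `u` representing the basis tensor
`e_{u(1)} ⊗ ⋯ ⊗ e_{u(k)}`; the empty word represents the vacuum Ω. -/
abbrev FockF (d : ℕ) := List (Fin d) →₀ ℝ

def vac {d : ℕ} : FockF d := Finsupp.single [] 1

def eVec {d : ℕ} (u : List (Fin d)) : FockF d := Finsupp.single u 1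

/-- Diagonal operator with diagonal entries `f u` in the tensor basis. -/
def diagOp {d : ℕ} (f : List (Fin d) → ℝ) : FockF d →ₗ[ℝ] FockF d :=
  Finsupp.lsum ℝ fun u => f u • Finsupp.lsingle u

/-- The diagonal entry of K_C at the basis tensor e_u:
`K_u = ∏_{j=1}^{k} C_{(u(j),…,u(k))}`, the product of the `C`-entries over all
nonempty suffixes of `u`, corresponding to
`K_C = (I⊗…⊗I⊗C^{(1)}) ⋯ (I⊗C^{(k-1)}) C^{(k)}`. -/
def kC {d : ℕ} (c : List (Fin d) → ℝ) (u : List (Fin d)) : ℝ :=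
  ∏ j ∈ Finset.range u.length, c (u.drop j)

/-- The kernel K_C as an operator. -/
def Kop {d : ℕ} (c : List (Fin d) → ℝ) : FockF d →ₗ[ℝ] FockF d := diagOp (kC c)

/-- The operator C acting as the diagonal matrix C^{(k)} on each H^{⊗k}. -/
def Cop {d : ℕ} (c : List (Fin d) → ℝ) : FockF d →ₗ[ℝ] FockF d := diagOp c

/-- The undeformed inner product ⟨ζ,·⟩ (basis tensors orthonormal, distinct degrees
orthogonal), as a linear functional in the second variable. -/
def ipW {d : ℕ} (ζ : FockF d) : FockF d →ₗ[ℝ] ℝ :=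
  Finsupp.lsum ℝ fun u => LinearMap.smulRight (LinearMap.id : ℝ →ₗ[ℝ] ℝ) (ζ u)

/-- The deformed pre-inner product ⟨ζ,η⟩_C = ⟨ζ, K_C η⟩, linear in the second variable. -/
def ipCL {d : ℕ} (c : List (Fin d) → ℝ) (ζ : FockF d) : FockF d →ₗ[ℝ] ℝ :=
  (ipW ζ).comp (Kop c)

def ipC {d : ℕ} (c : List (Fin d) → ℝ) (ζ η : FockF d) : ℝ := ipCL c ζ η

/-- The deformed seminorm. -/
def nrmC {d : ℕ} (c : List (Fin d) → ℝ) (ζ : FockF d) : ℝ := Real.sqrt (ipC c ζ ζ)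

/-- Free (left) creation operator a_i⁺. -/
def aPlus {d : ℕ} (i : Fin d) : FockF d →ₗ[ℝ] FockF d :=
  Finsupp.lmapDomain ℝ ℝ (fun u => i :: u)

/-- Free (left) annihilation operator a_i⁻. -/
def aMinus {d : ℕ} (i : Fin d) : FockF d →ₗ[ℝ] FockF d :=
  Finsupp.lsum ℝ fun u =>
    match u with
    | [] => 0
    | j :: v => if j = i then Finsupp.lsingle v else 0

/-- The block-diagonal operator T with matrix entries `t w u` (T e_u = Σ_w t w u e_w,
the sum over words w of the same length as u). -/
def Tmat {d : ℕ} (t : List (Fin d) → List (Fin d) → ℝ) : FockF d →ₗ[ℝ] FockF d :=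
  Finsupp.lsum ℝ fun u => ∑ w ∈ wordsLen d u.length, t w u • Finsupp.lsingle w

/-- t is degree preserving: the matrices T_i^{(k)} act within each H^{⊗k}. -/
def DegPres {d : ℕ} (t : Fin d → List (Fin d) → List (Fin d) → ℝ) : Prop :=
  ∀ i w u, t i w u ≠ 0 → w.length = u.length

/-- The condition (T_i)^t K_C = K_C T_i, entrywise. -/
def TransposeCond {d : ℕ} (c : List (Fin d) → ℝ)
    (t : Fin d → List (Fin d) → List (Fin d) → ℝ) : Prop :=
  ∀ i u w, t i u w * kC c u = kC c w * t i w u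

/-- The operator X_i = a_i⁺ + T_i + ã_i⁻, where ã_i⁻ = a_i⁻ C. -/
def Xop {d : ℕ} (c : List (Fin d) → ℝ) (t : Fin d → List (Fin d) → List (Fin d) → ℝ)
    (i : Fin d) : FockF d →ₗ[ℝ] FockF d :=
  aPlus i + Tmat (t i) + (aMinus i).comp (Cop c)

/-- Evaluation of a polynomial in the operators X₁,…,X_d. -/
def evalX {d : ℕ} (c : List (Fin d) → ℝ) (t : Fin d → List (Fin d) → List (Fin d) → ℝ) :
    NCPoly d →ₐ[ℝ] Module.End ℝ (FockF d) :=
  FreeAlgebra.lift ℝ (fun i => Xop c t i)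

/-- The Fock state φ_{C,{T_i}} : P ↦ ⟨Ω, P(X₁,…,X_d)Ω⟩_C. -/
def fockPhi {d : ℕ} (c : List (Fin d) → ℝ) (t : Fin d → List (Fin d) → List (Fin d) → ℝ) :
    NCPoly d →ₗ[ℝ] ℝ :=
  (ipCL c vac).comp ((LinearMap.applyₗ (vac : FockF d)).comp (evalX c t).toLinearMap)

lemma mem_wordsLen {d : ℕ} : ∀ {k : ℕ} {w : List (Fin d)}, w ∈ wordsLen d k ↔ w.length = k
  | 0, w => by simp [wordsLen, List.length_eq_zero_iff]
  | k+1, w => by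
    simp only [wordsLen, Finset.mem_image, Finset.mem_product, Finset.mem_univ, true_and]
    constructor
    · rintro ⟨⟨i, v⟩, hv, rfl⟩
      simp [mem_wordsLen.mp hv]
    · intro hw
      match w, hw with
      | i :: v, hw => exact ⟨⟨i, v⟩, mem_wordsLen.mpr (by simpa using hw), rfl⟩

lemma diagOp_eVec {d : ℕ} (f : List (Fin d) → ℝ) (u : List (Fin d)) :
    diagOp f (eVec u) = f u • eVec u := by
  simp [diagOp, eVec, Finsupp.lsum_single]

lemma aPlus_eVec {d : ℕ} (i : Fin d) (u : List (Fin d)) :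
    aPlus i (eVec u) = eVec (i :: u) := by
  simp [aPlus, eVec, Finsupp.lmapDomain_apply, Finsupp.mapDomain_single]

lemma Tmat_eVec {d : ℕ} (t : List (Fin d) → List (Fin d) → ℝ) (u : List (Fin d)) :
    Tmat t (eVec u) = ∑ w ∈ wordsLen d u.length, t w u • eVec w := by
  simp [Tmat, eVec, Finsupp.lsum_single]

lemma aMinus_eVec_nil {d : ℕ} (i : Fin d) : aMinus i (eVec ([] : List (Fin d))) = 0 := by
  simp [aMinus, eVec, Finsupp.lsum_single]

lemma aMinus_eVec_cons {d : ℕ} (i j : Fin d) (v : List (Fin d)) :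
    aMinus i (eVec (j :: v)) = if j = i then eVec v else 0 := by
  by_cases h : j = i <;> simp [aMinus, eVec, Finsupp.lsum_single, h]

def annV {d : ℕ} (c : List (Fin d) → ℝ) (i : Fin d) : List (Fin d) → FockF d
  | [] => 0
  | j :: v => if j = i then c (j :: v) • eVec v else 0

lemma Xop_eVec {d : ℕ} (c : List (Fin d) → ℝ) (t : Fin d → List (Fin d) → List (Fin d) → ℝ)
    (i : Fin d) (u : List (Fin d)) :
    Xop c t i (eVec u) =
      eVec (i :: u) + (∑ w ∈ wordsLen d u.length, t i w u • eVec w) + annV c i u := by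
  have hC : Cop c (eVec u) = c u • eVec u := diagOp_eVec c u
  simp only [Xop, LinearMap.add_apply, LinearMap.comp_apply, hC, map_smul]
  rw [aPlus_eVec, Tmat_eVec]
  congr 1
  cases u with
  | nil => simp [aMinus_eVec_nil, annV]
  | cons j v =>
    rw [aMinus_eVec_cons, annV]
    by_cases h : j = i <;> simp [h]
lemma ipW_apply {d : ℕ} (ζ η : FockF d) : ipW ζ η = η.sum fun u r => r * ζ u := by
  simp only [ipW, Finsupp.lsum_apply]
  rfl

lemma ipW_eVec {d : ℕ} (u : List (Fin d)) (η : FockF d) : ipW (eVec u) η = η u := by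
  rw [ipW_apply]
  rw [Finsupp.sum_eq_single u (fun v _ hvu => by simp [eVec, Finsupp.single_apply, Ne.symm hvu]) (by simp)]
  simp [eVec]

lemma kC_cons {d : ℕ} (c : List (Fin d) → ℝ) (i : Fin d) (u : List (Fin d)) :
    kC c (i :: u) = c (i :: u) * kC c u := by
  simp only [kC, List.length_cons, Finset.prod_range_succ']
  rw [mul_comm]
  rfl

lemma ipC_eVec {d : ℕ} (c : List (Fin d) → ℝ) (u v : List (Fin d)) :
    ipC c (eVec u) (eVec v) = if u = v then kC c v else 0 := by
  simp only [ipC, ipCL, LinearMap.comp_apply, Kop, diagOp_eVec, map_smul, ipW_eVec]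
  by_cases h : u = v <;> simp [eVec, Finsupp.single_apply, h, eq_comm]

lemma ipC_add_left {d : ℕ} (c : List (Fin d) → ℝ) (ζ₁ ζ₂ η : FockF d) :
    ipC c (ζ₁ + ζ₂) η = ipC c ζ₁ η + ipC c ζ₂ η := by
  simp only [ipC, ipCL, LinearMap.comp_apply, ipW_apply, Finsupp.add_apply]
  rw [← Finsupp.sum_add]
  congr 1; ext u r; ring

lemma ipC_smul_left {d : ℕ} (c : List (Fin d) → ℝ) (a : ℝ) (ζ η : FockF d) :
    ipC c (a • ζ) η = a * ipC c ζ η := by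
  simp only [ipC, ipCL, LinearMap.comp_apply, ipW_apply, Finsupp.smul_apply, Finsupp.mul_sum]
  congr 1; ext u r; simp [smul_eq_mul]; ring

lemma ipC_zero_left {d : ℕ} (c : List (Fin d) → ℝ) (η : FockF d) : ipC c 0 η = 0 := by
  simp only [ipC, ipCL, LinearMap.comp_apply, ipW_apply]
  simp

lemma ipC_sum_left {d : ℕ} (c : List (Fin d) → ℝ) {α : Type*} (s : Finset α)
    (f : α → FockF d) (η : FockF d) :
    ipC c (∑ w ∈ s, f w) η = ∑ w ∈ s, ipC c (f w) η := by
  induction s using Finset.induction with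
  | empty => simp [ipC_zero_left]
  | insert _ _ h ih => rw [Finset.sum_insert h, ipC_add_left, ih, Finset.sum_insert h]
lemma ipC_annV_right {d : ℕ} (c : List (Fin d) → ℝ) (i : Fin d) (u v : List (Fin d)) :
    ipC c (eVec u) (annV c i v) =
      (if i :: u = v then kC c v else 0) := by
  cases v with
  | nil => simp [annV, ipC, ipCL]
  | cons j v' =>
    rw [annV]
    by_cases h : j = i
    · subst h
      rw [if_pos rfl]
      simp only [ipC, ipCL, LinearMap.comp_apply, map_smul, smul_eq_mul]
      have : (ipW (eVec u)) (Kop c (eVec v')) = ipC c (eVec u) (eVec v') := rfl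
      rw [this, ipC_eVec]
      by_cases h2 : u = v'
      · subst h2
        simp [kC_cons, mul_comm]
      · have : ¬ (j :: u = j :: v') := by simp [h2]
        simp [h2, this]
    · have hne : ¬ (i :: u = j :: v') := fun hh => h (by injection hh with h1 _; exact h1.symm)
      rw [if_neg h, if_neg hne]
      simp [ipC, ipCL]

lemma ipC_annV_left {d : ℕ} (c : List (Fin d) → ℝ) (i : Fin d) (u v : List (Fin d)) :
    ipC c (annV c i u) (eVec v) =
      (if i :: v = u then kC c u else 0) := by
  cases u with
  | nil => simp [annV, ipC_zero_left]
  | cons j u' =>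
    rw [annV]
    by_cases h : j = i
    · subst h
      rw [if_pos rfl, ipC_smul_left, ipC_eVec]
      by_cases h2 : u' = v
      · subst h2
        simp [kC_cons]
      · have hne : ¬ (j :: v = j :: u') := by
          intro hh; exact h2 (by injection hh with _ h3; exact h3.symm)
        rw [if_neg h2, mul_zero, if_neg hne]
    · have hne : ¬ (i :: v = j :: u') := fun hh => h (by injection hh with h1 _; exact h1.symm)
      rw [if_neg h, if_neg hne, ipC_zero_left]

lemma Xop_sym_eVec {d : ℕ} (c : List (Fin d) → ℝ)
    (t : Fin d → List (Fin d) → List (Fin d) → ℝ) (hdeg : DegPres t)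
    (ht : TransposeCond c t) (i : Fin d) (u v : List (Fin d)) :
    ipC c (Xop c t i (eVec u)) (eVec v) = ipC c (eVec u) (Xop c t i (eVec v)) := by
  rw [Xop_eVec, Xop_eVec]
  simp only [ipC_add_left]
  rw [ipC_sum_left]
  have hR : ipC c (eVec u) (eVec (i :: v) + (∑ w ∈ wordsLen d v.length, t i w v • eVec w)
      + annV c i v) = ipC c (eVec u) (eVec (i::v)) +
      (∑ w ∈ wordsLen d v.length, t i w v * ipC c (eVec u) (eVec w)) +
      ipC c (eVec u) (annV c i v) := by
    simp only [ipC, ipCL, LinearMap.comp_apply, map_add, map_sum, map_smul, smul_eq_mul]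
  rw [hR, ipC_annV_left, ipC_annV_right]
  have hmidL : (∑ w ∈ wordsLen d u.length, ipC c (t i w u • eVec w) (eVec v))
      = t i v u * kC c v := by
    rw [Finset.sum_eq_single v]
    · rw [ipC_smul_left, ipC_eVec, if_pos rfl]
    · intro w _ hwv
      rw [ipC_smul_left, ipC_eVec, if_neg hwv, mul_zero]
    · intro hv
      by_cases hz : t i v u = 0
      · simp [hz, ipC_zero_left]
      · exact absurd (mem_wordsLen.mpr (hdeg i v u hz)) hv
  have hmidR : (∑ w ∈ wordsLen d v.length, t i w v * ipC c (eVec u) (eVec w))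
      = t i u v * kC c u := by
    rw [Finset.sum_eq_single u]
    · rw [ipC_eVec, if_pos rfl]
    · intro w _ hwu
      rw [ipC_eVec, if_neg (Ne.symm hwu), mul_zero]
    · intro hu
      by_cases hz : t i u v = 0
      · simp [hz]
      · exact absurd (mem_wordsLen.mpr (hdeg i u v hz)) hu
  rw [hmidL, hmidR, ipC_eVec, ipC_eVec]
  have hB : (if i :: v = u then kC c u else 0) = (if u = i :: v then kC c (i :: v) else 0) := by
    by_cases h2 : u = i :: v
    · subst h2; simp
    · rw [if_neg (fun hh => h2 hh.symm), if_neg h2]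
  have hm : t i v u * kC c v = t i u v * kC c u := by rw [ht i u v]; ring
  rw [hB, hm]
  ring
lemma ipC_add_right {d : ℕ} (c : List (Fin d) → ℝ) (ζ η₁ η₂ : FockF d) :
    ipC c ζ (η₁ + η₂) = ipC c ζ η₁ + ipC c ζ η₂ := by
  simp [ipC, map_add]

lemma ipC_smul_right {d : ℕ} (c : List (Fin d) → ℝ) (a : ℝ) (ζ η : FockF d) :
    ipC c ζ (a • η) = a * ipC c ζ η := by
  simp [ipC, map_smul]

lemma ipC_zero_right {d : ℕ} (c : List (Fin d) → ℝ) (ζ : FockF d) : ipC c ζ 0 = 0 := by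
  simp [ipC]

lemma Xop_sym {d : ℕ} (c : List (Fin d) → ℝ)
    (t : Fin d → List (Fin d) → List (Fin d) → ℝ) (hdeg : DegPres t)
    (ht : TransposeCond c t) (i : Fin d) (ζ η : FockF d) :
    ipC c (Xop c t i ζ) η = ipC c ζ (Xop c t i η) := by
  induction ζ using Finsupp.induction_linear with
  | zero => simp [map_zero, ipC_zero_left]
  | add f g hf hg => rw [map_add, ipC_add_left, ipC_add_left, hf, hg]
  | single a b =>
    have hb : (Finsupp.single a b : FockF d) = b • eVec a := by
      simp [eVec, Finsupp.smul_single]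
    rw [hb, map_smul, ipC_smul_left, ipC_smul_left]
    congr 1
    induction η using Finsupp.induction_linear with
    | zero => simp [map_zero, ipC_zero_right]
    | add f g hf hg => rw [map_add, ipC_add_right, ipC_add_right, hf, hg]
    | single a' b' =>
      have hb' : (Finsupp.single a' b' : FockF d) = b' • eVec a' := by
        simp [eVec, Finsupp.smul_single]
      rw [hb', map_smul, ipC_smul_right, ipC_smul_right, Xop_sym_eVec c t hdeg ht]

lemma evalX_adj {d : ℕ} (c : List (Fin d) → ℝ)
    (t : Fin d → List (Fin d) → List (Fin d) → ℝ) (hdeg : DegPres t)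
    (ht : TransposeCond c t) (p : NCPoly d) (ζ η : FockF d) :
    ipC c (evalX c t p ζ) η = ipC c ζ (evalX c t (star p) η) := by
  induction p using FreeAlgebra.induction generalizing ζ η with
  | grade0 r =>
    have hs : star (algebraMap ℝ (NCPoly d) r) = algebraMap ℝ (NCPoly d) r := by
      simp
    rw [hs]
    have he : ∀ ξ : FockF d, evalX c t (algebraMap ℝ (NCPoly d) r) ξ = r • ξ := by
      intro ξ
      rw [AlgHom.commutes]
      simp [Module.algebraMap_end_apply]
    rw [he, he, ipC_smul_left, ipC_smul_right]
  | grade1 i =>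
    have hs : star (FreeAlgebra.ι ℝ i) = FreeAlgebra.ι ℝ i := by
      simp [FreeAlgebra.star_ι]
    have he : ∀ ξ : FockF d, evalX c t (FreeAlgebra.ι ℝ i) ξ = Xop c t i ξ := by
      intro ξ
      simp [evalX, FreeAlgebra.lift_ι_apply]
    rw [hs, he, he, Xop_sym c t hdeg ht]
  | mul p q hp hq =>
    have hs : star (p * q) = star q * star p := star_mul p q
    rw [hs, map_mul, map_mul]
    have : (evalX c t p * evalX c t q) ζ = evalX c t p (evalX c t q ζ) := rfl
    rw [this]
    have : (evalX c t (star q) * evalX c t (star p)) η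
        = evalX c t (star q) (evalX c t (star p) η) := rfl
    rw [this, hp, hq]
  | add p q hp hq =>
    rw [star_add, map_add, map_add, LinearMap.add_apply, LinearMap.add_apply,
      ipC_add_left, ipC_add_right, hp, hq]
def Pfam {d : ℕ} (c : List (Fin d) → ℝ) (t : Fin d → List (Fin d) → List (Fin d) → ℝ) :
    List (Fin d) → NCPoly d
  | [] => 1
  | i :: v =>
      FreeAlgebra.ι ℝ i * Pfam c t v
        - ∑ w ∈ (wordsLen d v.length).attach, t i w.1 v • Pfam c t w.1
        - (match v with
           | [] => 0
           | j :: v' => if j = i then c (j :: v') • Pfam c t v' else 0)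
termination_by u => u.length
decreasing_by
  all_goals simp_all
  all_goals try (have := mem_wordsLen.mp w.2)
  all_goals omega

lemma Pfam_nil {d : ℕ} (c : List (Fin d) → ℝ) (t : Fin d → List (Fin d) → List (Fin d) → ℝ) :
    Pfam c t ([] : List (Fin d)) = 1 := by rw [Pfam.eq_def]

lemma Pfam_cons_nil {d : ℕ} (c : List (Fin d) → ℝ) (t : Fin d → List (Fin d) → List (Fin d) → ℝ)
    (i : Fin d) :
    Pfam c t [i] = FreeAlgebra.ι ℝ i * Pfam c t []
        - ∑ w ∈ (wordsLen d (List.length ([] : List (Fin d)))).attach, t i w.1 [] • Pfam c t w.1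
        - 0 := by
  rw [Pfam.eq_def]

lemma Pfam_cons_cons {d : ℕ} (c : List (Fin d) → ℝ) (t : Fin d → List (Fin d) → List (Fin d) → ℝ)
    (i j : Fin d) (v' : List (Fin d)) :
    Pfam c t (i :: j :: v') = FreeAlgebra.ι ℝ i * Pfam c t (j :: v')
        - ∑ w ∈ (wordsLen d (j :: v').length).attach, t i w.1 (j :: v') • Pfam c t w.1
        - (if j = i then c (j :: v') • Pfam c t v' else 0) := by
  rw [Pfam.eq_def]

lemma evalX_ι_mul {d : ℕ} (c : List (Fin d) → ℝ)
    (t : Fin d → List (Fin d) → List (Fin d) → ℝ) (i : Fin d) (p : NCPoly d) (ξ : FockF d) :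
    evalX c t (FreeAlgebra.ι ℝ i * p) ξ = Xop c t i (evalX c t p ξ) := by
  rw [map_mul]
  have : (evalX c t (FreeAlgebra.ι ℝ i) * evalX c t p) ξ
      = evalX c t (FreeAlgebra.ι ℝ i) (evalX c t p ξ) := rfl
  rw [this]
  simp [evalX, FreeAlgebra.lift_ι_apply]

lemma evalX_Pfam {d : ℕ} (c : List (Fin d) → ℝ)
    (t : Fin d → List (Fin d) → List (Fin d) → ℝ) :
    ∀ u : List (Fin d), evalX c t (Pfam c t u) vac = eVec u := by
  have main : ∀ n : ℕ, ∀ u : List (Fin d), u.length ≤ n →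
      evalX c t (Pfam c t u) vac = eVec u := by
    intro n
    induction n with
    | zero =>
      intro u hu
      have : u = [] := List.length_eq_zero_iff.mp (Nat.le_zero.mp hu)
      subst this
      rw [Pfam_nil, map_one]
      rfl
    | succ n ih =>
      intro u hu
      match u with
      | [] =>
        rw [Pfam_nil, map_one]
        rfl
      | i :: v =>
        have hv : v.length ≤ n := by simpa using hu
        have hsum : evalX c t (∑ w ∈ (wordsLen d v.length).attach, t i w.1 v • Pfam c t w.1) vac
            = ∑ w ∈ wordsLen d v.length, t i w v • eVec w := by
          rw [map_sum, LinearMap.sum_apply, ← Finset.sum_attach (wordsLen d v.length)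
            (fun w => t i w v • eVec w)]
          refine Finset.sum_congr rfl ?_
          intro w _
          rw [map_smul, LinearMap.smul_apply, ih w.1 ((mem_wordsLen.mp w.2).le.trans hv)]
        cases v with
        | nil =>
          rw [Pfam_cons_nil, map_sub, map_sub, LinearMap.sub_apply, LinearMap.sub_apply,
            evalX_ι_mul, ih [] (by simp), Xop_eVec, hsum]
          have : annV c i ([] : List (Fin d)) = 0 := rfl
          rw [this]
          simp
        | cons j v' =>
          have hv' : v'.length ≤ n := by simp at hv; omega
          rw [Pfam_cons_cons, map_sub, map_sub, LinearMap.sub_apply, LinearMap.sub_apply,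
            evalX_ι_mul, ih (j :: v') hv, Xop_eVec, hsum]
          have hann : evalX c t (if j = i then c (j :: v') • Pfam c t v' else 0) vac
              = annV c i (j :: v') := by
            by_cases h : j = i
            · rw [if_pos h, annV, if_pos h, map_smul, LinearMap.smul_apply, ih v' hv']
            · rw [if_neg h, annV, if_neg h, map_zero]
              rfl
          rw [hann]
          abel
  intro u
  exact main u.length u le_rfl
def spanS (d n : ℕ) : Submodule ℝ (NCPoly d) :=
  Submodule.span ℝ {q : NCPoly d | ∃ v : List (Fin d), v.length < n ∧ q = Xmon v}

lemma spanS_mono {d : ℕ} {n m : ℕ} (h : n ≤ m) : spanS d n ≤ spanS d m :=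
  Submodule.span_mono (fun q ⟨v, hv, hq⟩ => ⟨v, lt_of_lt_of_le hv h, hq⟩)

lemma Xmon_nil {d : ℕ} : Xmon ([] : List (Fin d)) = 1 := rfl

lemma Xmon_cons {d : ℕ} (i : Fin d) (v : List (Fin d)) :
    Xmon (i :: v) = FreeAlgebra.ι ℝ i * Xmon v := by
  simp [Xmon]

lemma mul_mem_spanS {d n : ℕ} (i : Fin d) {x : NCPoly d} (hx : x ∈ spanS d n) :
    FreeAlgebra.ι ℝ i * x ∈ spanS d (n + 1) := by
  induction hx using Submodule.span_induction with
  | mem x hx =>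
    obtain ⟨v, hlen, rfl⟩ := hx
    exact Submodule.subset_span ⟨i :: v, by simpa using hlen, (Xmon_cons i v).symm⟩
  | zero => rw [mul_zero]; exact zero_mem _
  | add x y _ _ hx hy => rw [mul_add]; exact add_mem hx hy
  | smul a x _ hx => rw [mul_smul_comm]; exact Submodule.smul_mem _ a hx

lemma Pfam_monic {d : ℕ} (c : List (Fin d) → ℝ)
    (t : Fin d → List (Fin d) → List (Fin d) → ℝ) :
    ∀ u : List (Fin d), Pfam c t u - Xmon u ∈ spanS d u.length := by
  have main : ∀ n : ℕ, ∀ u : List (Fin d), u.length ≤ n →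
      Pfam c t u - Xmon u ∈ spanS d u.length := by
    intro n
    induction n with
    | zero =>
      intro u hu
      have : u = [] := List.length_eq_zero_iff.mp (Nat.le_zero.mp hu)
      subst this
      rw [Pfam_nil, Xmon_nil, sub_self]
      exact zero_mem _
    | succ n ih =>
      have hmem : ∀ u : List (Fin d), u.length ≤ n → ∀ m, u.length < m →
          Pfam c t u ∈ spanS d m := by
        intro u hu m hm
        have h1 : Pfam c t u = (Pfam c t u - Xmon u) + Xmon u := by abel
        rw [h1]
        exact add_mem (spanS_mono hm.le (ih u hu)) (Submodule.subset_span ⟨u, hm, rfl⟩)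
      intro u hu
      match u with
      | [] =>
        rw [Pfam_nil, Xmon_nil, sub_self]
        exact zero_mem _
      | i :: v =>
        have hv : v.length ≤ n := by simpa using hu
        have h1 : FreeAlgebra.ι ℝ i * (Pfam c t v - Xmon v) ∈ spanS d (v.length + 1) :=
          mul_mem_spanS i (ih v hv)
        have h2 : (∑ w ∈ (wordsLen d v.length).attach, t i w.1 v • Pfam c t w.1)
            ∈ spanS d (v.length + 1) := by
          refine Submodule.sum_mem _ ?_
          intro w _
          refine Submodule.smul_mem _ _ ?_
          have hw : w.1.length = v.length := mem_wordsLen.mp w.2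
          exact hmem w.1 (hw.le.trans hv) _ (by omega)
        cases v with
        | nil =>
          have key : Pfam c t [i] - Xmon [i] = FreeAlgebra.ι ℝ i * (Pfam c t [] - Xmon [])
              - (∑ w ∈ (wordsLen d (List.length ([] : List (Fin d)))).attach,
                  t i w.1 [] • Pfam c t w.1) := by
            rw [Pfam_cons_nil, Xmon_cons, mul_sub]
            abel
          rw [show ([i] : List (Fin d)).length = 0 + 1 from rfl, key]
          exact sub_mem h1 h2
        | cons j v' =>
          have hv' : v'.length ≤ n := by simp at hv; omega
          have h3 : (if j = i then c (j :: v') • Pfam c t v' else 0)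
              ∈ spanS d ((j :: v').length + 1) := by
            by_cases h : j = i
            · rw [if_pos h]
              refine Submodule.smul_mem _ _ ?_
              exact hmem v' hv' _ (by simp only [List.length_cons]; omega)
            · rw [if_neg h]; exact zero_mem _
          have key : Pfam c t (i :: j :: v') - Xmon (i :: j :: v')
              = FreeAlgebra.ι ℝ i * (Pfam c t (j :: v') - Xmon (j :: v'))
              - (∑ w ∈ (wordsLen d (j :: v').length).attach, t i w.1 (j :: v') • Pfam c t w.1)
              - (if j = i then c (j :: v') • Pfam c t v' else 0) := by
            rw [Pfam_cons_cons, Xmon_cons, mul_sub]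
            abel
          rw [show (i :: j :: v').length = (j :: v').length + 1 from rfl, key]
          exact sub_mem (sub_mem h1 h2) h3
  intro u
  exact main u.length u le_rfl
/-- every Fock state has a MOPS {P_u}, with P_u(X₁,…,X_d)Ω = e_u. -/
theorem fock_state_has_mops {d : ℕ} (c : List (Fin d) → ℝ) (hc : ∀ u, 0 ≤ c u)
    (t : Fin d → List (Fin d) → List (Fin d) → ℝ) (hdeg : DegPres t)
    (ht : TransposeCond c t) :
    ∃ P : List (Fin d) → NCPoly d, IsMOPS (fockPhi c t) P ∧
      ∀ u : List (Fin d), evalX c t (P u) vac = eVec u := by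
  refine ⟨Pfam c t, ⟨fun u => Pfam_monic c t u, ?_⟩, evalX_Pfam c t⟩
  intro u v huv
  have h1 : ipS (fockPhi c t) (Pfam c t u) (Pfam c t v)
      = ipC c vac (evalX c t (star (Pfam c t u) * Pfam c t v) vac) := rfl
  have h2 : evalX c t (star (Pfam c t u) * Pfam c t v) vac
      = evalX c t (star (Pfam c t u)) (evalX c t (Pfam c t v) vac) := by
    rw [map_mul]; rfl
  rw [h1, h2, evalX_Pfam, ← evalX_adj c t hdeg ht, evalX_Pfam, ipC_eVec, if_neg huv]
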